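/- arXiv:2207.05950 — 7 statements merged into one kernel-verified Lean document; each statement's English description precedes it below -/
import Mathlib

section
/- Error-accumulation bound for online trajectories (Theorem 'alg-perf-bound-err-inject'). Suppose for each time τ ∈ {1,…,H} the global hitting cost f_τ : ℝ^m → ℝ_{≥0} is μ-strongly convex, ℓ_T-smooth and C², and the global switching cost c_τ : ℝ^m × ℝ^m → ℝ_{≥0} is convex, ℓ_T-smooth and C². For y ∈ ℝ^m let ψ̃_t(y) denote the minimizer of ∑_{τ=t}^{H} ( f_τ(x_τ) + c_τ(x_τ, x_{τ-1}) ) over x_{t:H} subject to x_{t-1} = y. Let x₀, x₁*, …, x_H* be the offline optimal trajectory (so x_τ* = ψ̃₁(x₀)_τ), let x₀, x₁, …, x_H be an arbitrary trajectory, and define the per-step errors e_t = ‖x_t − ψ̃_t(x_{t-1})_t‖. Then ∑_{t=1}^H ‖x_t − x_t*‖² ≤ (C₀²/(1 − ρ_G)²) ∑_{t=1}^H e_t², where ρ_G = 1 − 2/(√(1 + 2ℓ_T/μ) + 1) and C₀ = max{1, 2ℓ_T/μ}. -/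
noncomputable section

/-- `h` is `ℓ`-smooth: differentiable with
`h(y) ≤ h(x) + ⟨∇h(x), y−x⟩ + (ℓ/2)‖y−x‖²` for all `x, y`. -/
def IsLSmooth {F : Type*} [NormedAddCommGroup F] [NormedSpace ℝ F] (ℓ : ℝ) (h : F → ℝ) : Prop :=
  Differentiable ℝ h ∧
    ∀ x y, h y ≤ h x + fderiv ℝ h x (y - x) + ℓ / 2 * ‖y - x‖ ^ 2

/-- `h` is `μ`-strongly convex: differentiable with
`h(y) ≥ h(x) + ⟨∇h(x), y−x⟩ + (μ/2)‖y−x‖²` for all `x, y`. -/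
def IsStronglyConvex {F : Type*} [NormedAddCommGroup F] [NormedSpace ℝ F] (μ : ℝ) (h : F → ℝ) :
    Prop :=
  Differentiable ℝ h ∧
    ∀ x y, h x + fderiv ℝ h x (y - x) + μ / 2 * ‖y - x‖ ^ 2 ≤ h y

/-- A two-argument cost viewed as a function on the product space `ℝ^m × ℝ^m`
equipped with the Euclidean (ℓ²) norm. -/
def pairFun {m : ℕ} (c : EuclideanSpace ℝ (Fin m) → EuclideanSpace ℝ (Fin m) → ℝ) :
    WithLp 2 (EuclideanSpace ℝ (Fin m) × EuclideanSpace ℝ (Fin m)) → ℝ :=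
  fun P => c (WithLp.equiv 2 _ P).1 (WithLp.equiv 2 _ P).2

/-!
Write `V t y` for the optimal cost from time `t` on, started at `x_{t-1} = y`. The gap
between the cost of `x` and the optimal cost `V 1 x₀` telescopes into the per-step regrets
`cost_t(x_t, x_{t-1}) + V (t+1) x_t - V t x_{t-1}`. Replacing only the `t`-th entry of the
optimal tail `ψ t x_{t-1}` by `x_t` bounds the regret by the increase of a `3ℓ`-smooth
function away from its minimiser, i.e. by `(3ℓ/2) e_t²`. Comparing `x` and `x*` with their
midpoint, strong convexity bounds the same gap from below by `(μ/4) ∑ ‖x_t - x*_t‖²`. Hence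
the error sum is at most `(6ℓ/μ) ∑ e_t²`, and `6ℓ/μ ≤ C₀²/(1-ρ_G)²` because `μ ≤ ℓ`
in positive dimension.
-/

open Finset

section Smooth

variable {E F : Type*} [NormedAddCommGroup E] [NormedSpace ℝ E]
  [NormedAddCommGroup F] [NormedSpace ℝ F]

theorem IsLSmooth.add {L₁ L₂ : ℝ} {h₁ h₂ : F → ℝ} (H₁ : IsLSmooth L₁ h₁)
    (H₂ : IsLSmooth L₂ h₂) : IsLSmooth (L₁ + L₂) (fun z => h₁ z + h₂ z) := by
  refine ⟨H₁.1.add H₂.1, fun u v => ?_⟩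
  rw [fderiv_fun_add (H₁.1 u) (H₂.1 u), add_apply]
  linarith [H₁.2 u v, H₂.2 u v]

theorem IsLSmooth.mono {L L' : ℝ} {h : F → ℝ} (H : IsLSmooth L h) (hL : L ≤ L') :
    IsLSmooth L' h :=
  ⟨H.1, fun u v => (H.2 u v).trans (by gcongr)⟩

theorem isLSmooth_const (a : ℝ) : IsLSmooth 0 (fun _ : F => a) :=
  ⟨differentiable_const a, fun u v => by simp⟩

theorem IsLSmooth.const_add {L : ℝ} {h : F → ℝ} (H : IsLSmooth L h) (a : ℝ) :
    IsLSmooth L (fun z => a + h z) := by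
  simpa using (isLSmooth_const a).add H

theorem IsLSmooth.sum {ι : Type*} {s : Finset ι} {L : ι → ℝ} {h : ι → F → ℝ}
    (H : ∀ i ∈ s, IsLSmooth (L i) (h i)) :
    IsLSmooth (∑ i ∈ s, L i) (fun z => ∑ i ∈ s, h i z) := by
  classical
  induction s using Finset.induction_on with
  | empty => simpa using isLSmooth_const (F := F) 0
  | insert i s hi ih =>
    simp only [sum_insert hi]
    exact (H i (mem_insert_self i s)).add (ih fun j hj => H j (mem_insert_of_mem hj))

theorem IsLSmooth.sub_le_of_forall_le {L : ℝ} {h : F → ℝ} (H : IsLSmooth L h) {z₀ : F}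
    (hmin : ∀ z, h z₀ ≤ h z) (z : F) : h z - h z₀ ≤ L / 2 * ‖z - z₀‖ ^ 2 := by
  have hz₀ : fderiv ℝ h z₀ = 0 := IsLocalMin.fderiv_eq_zero (Filter.Eventually.of_forall hmin)
  linarith [H.2 z₀ z, show fderiv ℝ h z₀ (z - z₀) = 0 by simp [hz₀]]

theorem IsLSmooth.comp_linearIsometry_add {L : ℝ} {h : F → ℝ} (H : IsLSmooth L h)
    (J : E →ₗᵢ[ℝ] F) (C : F) : IsLSmooth L (fun z => h (J z + C)) := by
  have hd : ∀ u, HasFDerivAt (fun z => h (J z + C))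
      ((fderiv ℝ h (J u + C)).comp J.toContinuousLinearMap) u := fun u =>
    (H.1 _).hasFDerivAt.comp u (J.toContinuousLinearMap.hasFDerivAt.add_const C)
  refine ⟨fun u => (hd u).differentiableAt, fun u v => ?_⟩
  have := H.2 (J u + C) (J v + C)
  rw [add_sub_add_right_eq_sub, ← map_sub, J.norm_map] at this
  simpa [(hd u).fderiv] using this

theorem IsStronglyConvex.le_of_isLSmooth [Nontrivial F] {μ L : ℝ} {h : F → ℝ}
    (hμ : IsStronglyConvex μ h) (hL : IsLSmooth L h) : μ ≤ L := by
  obtain ⟨v, hv⟩ := exists_ne (0 : F)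
  have hpos : 0 < ‖v‖ ^ 2 := by positivity
  have := (hμ.2 0 v).trans (hL.2 0 v)
  rw [sub_zero] at this
  nlinarith

theorem IsStronglyConvex.two_mul_midpoint_add_le {μ : ℝ} {h : F → ℝ}
    (hμ : IsStronglyConvex μ h) (a b : F) :
    2 * h (midpoint ℝ a b) + μ / 4 * ‖a - b‖ ^ 2 ≤ h a + h b := by
  set m := midpoint ℝ a b
  have hD : fderiv ℝ h m (a - m) + fderiv ℝ h m (b - m) = 0 := by
    rw [← map_add, sub_add_sub_comm, midpoint_add_self, sub_self, map_zero]
  have ha : ‖a - m‖ ^ 2 = ‖a - b‖ ^ 2 / 4 := by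
    rw [left_sub_midpoint, norm_smul]; norm_num; ring
  have hb : ‖b - m‖ ^ 2 = ‖a - b‖ ^ 2 / 4 := by
    rw [right_sub_midpoint, norm_smul, norm_sub_rev]; norm_num; ring
  have hma := hμ.2 m a
  have hmb := hμ.2 m b
  rw [ha] at hma
  rw [hb] at hmb
  linarith

end Smooth

section Cost

variable {E : Type*} (f : ℕ → E → ℝ) (c : ℕ → E → E → ℝ) (H : ℕ)

def stageCost (τ : ℕ) (X : ℕ → E) : ℝ := f τ (X τ) + c τ (X τ) (X (τ - 1))

def costFrom (t : ℕ) (X : ℕ → E) : ℝ := ∑ τ ∈ Icc t H, stageCost f c τ X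

def IsTailMinimizer (ψ : ℕ → E → ℕ → E) : Prop :=
  ∀ t ∈ Icc 1 H, ∀ y,
    ψ t y (t - 1) = y ∧ IsMinOn (costFrom f c H t) {X | X (t - 1) = y} (ψ t y)

variable {f c H}

theorem costFrom_of_lt {t : ℕ} (ht : H < t) (X : ℕ → E) : costFrom f c H t X = 0 := by
  simp [costFrom, Icc_eq_empty_of_lt ht]

theorem costFrom_eq_stageCost_add {t : ℕ} (ht : t ≤ H) (X : ℕ → E) :
    costFrom f c H t X = stageCost f c t X + costFrom f c H (t + 1) X := by
  rw [costFrom, Icc_eq_cons_Ioc ht, sum_cons, ← Icc_add_one_left_eq_Ioc, costFrom]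

theorem IsTailMinimizer.costFrom_le {ψ : ℕ → E → ℕ → E} (hψ : IsTailMinimizer f c H ψ)
    {t : ℕ} (ht : 1 ≤ t) (Y : ℕ → E) :
    costFrom f c H t (ψ t (Y (t - 1))) ≤ costFrom f c H t Y := by
  rcases le_or_gt t H with htH | hHt
  · exact isMinOn_iff.1 (hψ t (mem_Icc.2 ⟨ht, htH⟩) _).2 Y rfl
  · simp [costFrom_of_lt hHt]

theorem costFrom_one_sub_eq_sum (ψ : ℕ → E → ℕ → E) (x : ℕ → E) :
    costFrom f c H 1 x - costFrom f c H 1 (ψ 1 (x 0)) =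
      ∑ s ∈ Icc 1 H, (stageCost f c s x + costFrom f c H (s + 1) (ψ (s + 1) (x s))
        - costFrom f c H s (ψ s (x (s - 1)))) := by
  have htel := sum_Ico_sub (fun s => costFrom f c H s (ψ s (x (s - 1)))) (by omega : 1 ≤ H + 1)
  simp only [Ico_add_one_right_eq_Icc, add_tsub_cancel_right, costFrom_of_lt (lt_add_one H)]
    at htel
  rw [sum_congr rfl fun s _ => add_sub_assoc _ _ _, sum_add_distrib, htel, Nat.sub_self,
    costFrom]
  ring

end Cost

section Euclidean

open Function

variable {m : ℕ}

section Pair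

variable {g : EuclideanSpace ℝ (Fin m) → EuclideanSpace ℝ (Fin m) → ℝ}

theorem ConvexOn.pairFun_midpoint_le (hg : ConvexOn ℝ Set.univ (pairFun g))
    (a a' b b' : EuclideanSpace ℝ (Fin m)) :
    2 * g (midpoint ℝ a a') (midpoint ℝ b b') ≤ g a b + g a' b' := by
  have := hg.2 (Set.mem_univ (WithLp.toLp 2 (a, b))) (Set.mem_univ (WithLp.toLp 2 (a', b')))
    (by norm_num : (0:ℝ) ≤ 2⁻¹) (by norm_num : (0:ℝ) ≤ 2⁻¹) (by norm_num)
  simp only [pairFun, WithLp.equiv_apply, WithLp.ofLp_add, WithLp.ofLp_smul, Prod.smul_mk,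
    Prod.mk_add_mk, smul_eq_mul, midpoint_eq_smul_add, invOf_eq_inv, smul_add] at this ⊢
  linarith

theorem IsLSmooth.pairFun_left {L : ℝ} (hg : IsLSmooth L (pairFun g))
    (b : EuclideanSpace ℝ (Fin m)) : IsLSmooth L (fun z => g z b) := by
  let J : EuclideanSpace ℝ (Fin m) →ₗᵢ[ℝ]
      WithLp 2 (EuclideanSpace ℝ (Fin m) × EuclideanSpace ℝ (Fin m)) :=
    { toLinearMap := (WithLp.linearEquiv 2 ℝ _).symm.toLinearMap ∘ₗ LinearMap.inl ℝ _ _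
      norm_map' := WithLp.norm_toLp_fst 2 _ _ }
  convert hg.comp_linearIsometry_add J (WithLp.toLp 2 (0, b)) using 2 with z
  show g z b = pairFun g (WithLp.toLp 2 (z, 0) + WithLp.toLp 2 (0, b))
  simp [← WithLp.toLp_add, pairFun]

theorem IsLSmooth.pairFun_right {L : ℝ} (hg : IsLSmooth L (pairFun g))
    (a : EuclideanSpace ℝ (Fin m)) : IsLSmooth L (fun z => g a z) := by
  let J : EuclideanSpace ℝ (Fin m) →ₗᵢ[ℝ]
      WithLp 2 (EuclideanSpace ℝ (Fin m) × EuclideanSpace ℝ (Fin m)) :=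
    { toLinearMap := (WithLp.linearEquiv 2 ℝ _).symm.toLinearMap ∘ₗ LinearMap.inr ℝ _ _
      norm_map' := WithLp.norm_toLp_snd 2 _ _ }
  convert hg.comp_linearIsometry_add J (WithLp.toLp 2 (a, 0)) using 2 with z
  show g a z = pairFun g (WithLp.toLp 2 (0, z) + WithLp.toLp 2 (a, 0))
  simp [← WithLp.toLp_add, pairFun]

end Pair

variable {f : ℕ → EuclideanSpace ℝ (Fin m) → ℝ}
  {c : ℕ → EuclideanSpace ℝ (Fin m) → EuclideanSpace ℝ (Fin m) → ℝ} {H : ℕ}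
  {ψ : ℕ → EuclideanSpace ℝ (Fin m) → ℕ → EuclideanSpace ℝ (Fin m)}

theorem sum_sq_norm_sub_le_costFrom_sub {μ : ℝ}
    (hf : ∀ τ ∈ Icc 1 H, IsStronglyConvex μ (f τ))
    (hc : ∀ τ ∈ Icc 1 H, ConvexOn ℝ Set.univ (pairFun (c τ)))
    {X Y : ℕ → EuclideanSpace ℝ (Fin m)} (h₀ : Y 0 = X 0)
    (hY : IsMinOn (costFrom f c H 1) {Z | Z 0 = X 0} Y) :
    μ / 4 * ∑ τ ∈ Icc 1 H, ‖X τ - Y τ‖ ^ 2 ≤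
      costFrom f c H 1 X - costFrom f c H 1 Y := by
  set M := fun τ => midpoint ℝ (X τ) (Y τ)
  have hM : costFrom f c H 1 Y ≤ costFrom f c H 1 M :=
    isMinOn_iff.1 hY M (by simp [M, h₀])
  have hstage : ∀ τ ∈ Icc 1 H, 2 * stageCost f c τ M + μ / 4 * ‖X τ - Y τ‖ ^ 2 ≤
      stageCost f c τ X + stageCost f c τ Y := fun τ hτ => by
    have hfτ := (hf τ hτ).two_mul_midpoint_add_le (X τ) (Y τ)
    have hcτ := (hc τ hτ).pairFun_midpoint_le (X τ) (Y τ) (X (τ - 1)) (Y (τ - 1))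
    simp only [stageCost, M]
    linarith
  have hsum := sum_le_sum hstage
  rw [sum_add_distrib, sum_add_distrib, ← mul_sum, ← mul_sum] at hsum
  unfold costFrom at hM ⊢
  linarith

theorem isLSmooth_costFrom_update {ℓ : ℝ} (hℓ : 0 ≤ ℓ)
    (hf : ∀ τ ∈ Icc 1 H, IsLSmooth ℓ (f τ))
    (hc : ∀ τ ∈ Icc 1 H, IsLSmooth ℓ (pairFun (c τ))) {s : ℕ} (hs : 1 ≤ s)
    (p : ℕ → EuclideanSpace ℝ (Fin m)) :
    IsLSmooth (3 * ℓ) (fun z => costFrom f c H s (update p s z)) := by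
  -- the `s`-th entry enters stage `s` through both arguments and stage `s + 1` through one
  have hterm : ∀ τ ∈ Icc s H,
      IsLSmooth ((if τ = s then ℓ + ℓ else 0) + (if τ = s + 1 then ℓ else 0))
        (fun z => stageCost f c τ (update p s z)) := by
    intro τ hτ
    have hτ₁ : τ ∈ Icc 1 H := by simp only [mem_Icc] at hτ ⊢; omega
    by_cases hτs : τ = s
    · subst hτs
      simp only [if_pos, if_neg (by omega : τ ≠ τ + 1), add_zero, stageCost, update_self,
        update_of_ne (by omega : τ - 1 ≠ τ)]
      exact (hf τ hτ₁).add ((hc τ hτ₁).pairFun_left _)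
    by_cases hτs' : τ = s + 1
    · subst hτs'
      simp only [if_neg hτs, if_pos, zero_add, stageCost, update_of_ne hτs,
        add_tsub_cancel_right, update_self]
      exact ((hc _ hτ₁).pairFun_right _).const_add _
    · simp only [if_neg hτs, if_neg hτs', add_zero, stageCost, update_of_ne hτs,
        update_of_ne (by omega : τ - 1 ≠ s)]
      exact isLSmooth_const _
  refine (IsLSmooth.sum hterm).mono ?_
  rw [sum_add_distrib, sum_ite_eq', sum_ite_eq']
  split_ifs <;> linarith

theorem IsTailMinimizer.stageCost_add_sub_le (hψ : IsTailMinimizer f c H ψ) {ℓ : ℝ}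
    (hℓ : 0 ≤ ℓ) (hf : ∀ τ ∈ Icc 1 H, IsLSmooth ℓ (f τ))
    (hc : ∀ τ ∈ Icc 1 H, IsLSmooth ℓ (pairFun (c τ)))
    {s : ℕ} (hs : s ∈ Icc 1 H) (x : ℕ → EuclideanSpace ℝ (Fin m)) :
    stageCost f c s x + costFrom f c H (s + 1) (ψ (s + 1) (x s))
        - costFrom f c H s (ψ s (x (s - 1))) ≤
      3 * ℓ / 2 * ‖x s - ψ s (x (s - 1)) s‖ ^ 2 := by
  obtain ⟨hs₁, hsH⟩ := mem_Icc.1 hs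
  set p := ψ s (x (s - 1))
  set φ := fun z => costFrom f c H s (update p s z)
  have hp : p (s - 1) = x (s - 1) := (hψ s hs _).1
  have hφp : φ (p s) = costFrom f c H s p := by simp only [φ, update_eq_self]
  have hmin : ∀ z, φ (p s) ≤ φ z := fun z => by
    simpa [hφp, update_of_ne (by omega : s - 1 ≠ s), hp] using
      hψ.costFrom_le hs₁ (update p s z)
  -- `x s` followed by the tail of `p` is admissible for the problem from `s + 1`
  have hbellman : stageCost f c s x + costFrom f c H (s + 1) (ψ (s + 1) (x s)) ≤ φ (x s) := by
    have htail := hψ.costFrom_le (by omega : 1 ≤ s + 1) (update p s (x s))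
    have hhead : stageCost f c s (update p s (x s)) = stageCost f c s x := by
      simp [stageCost, update_of_ne (by omega : s - 1 ≠ s), hp]
    simp only [add_tsub_cancel_right, update_self] at htail
    simp only [φ, costFrom_eq_stageCost_add hsH, hhead]
    linarith
  have hgrowth : φ (x s) - φ (p s) ≤ 3 * ℓ / 2 * ‖x s - p s‖ ^ 2 :=
    (isLSmooth_costFrom_update hℓ hf hc hs₁ p).sub_le_of_forall_le hmin (x s)
  linarith

end Euclidean

theorem three_mul_le_of_two_le {a : ℝ} (ha : 2 ≤ a) :
    3 * a ≤ max 1 a ^ 2 / (1 - (1 - 2 / (√(1 + a) + 1))) ^ 2 := by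
  have hr : √(1 + a) ^ 2 = 1 + a := Real.sq_sqrt (by linarith)
  have hr₁ : 1 ≤ √(1 + a) := Real.one_le_sqrt.2 (by linarith)
  rw [max_eq_right (by linarith), sub_sub_cancel, div_pow, div_div_eq_mul_div,
    le_div_iff₀ (by norm_num)]
  nlinarith [mul_le_mul_of_nonneg_left hr₁ (by positivity : 0 ≤ a ^ 2)]

theorem stmt4_general {m : ℕ} (μ ℓT : ℝ) (hμ : 0 < μ) (H : ℕ) (hH : 1 ≤ H)
    (f : ℕ → EuclideanSpace ℝ (Fin m) → ℝ)
    (c : ℕ → EuclideanSpace ℝ (Fin m) → EuclideanSpace ℝ (Fin m) → ℝ)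
    (hf : ∀ τ ∈ Finset.Icc 1 H, IsStronglyConvex μ (f τ) ∧ IsLSmooth ℓT (f τ) ∧
      (∀ x, 0 ≤ f τ x) ∧ ContDiff ℝ 2 (f τ))
    (hc : ∀ τ ∈ Finset.Icc 1 H, ConvexOn ℝ Set.univ (pairFun (c τ)) ∧
      IsLSmooth ℓT (pairFun (c τ)) ∧ (∀ x x', 0 ≤ c τ x x') ∧ ContDiff ℝ 2 (pairFun (c τ)))
    (ψ : ℕ → EuclideanSpace ℝ (Fin m) → (ℕ → EuclideanSpace ℝ (Fin m)))
    (hψ : ∀ t ∈ Finset.Icc 1 H, ∀ y,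
      ψ t y (t - 1) = y ∧
        IsMinOn
          (fun X : ℕ → EuclideanSpace ℝ (Fin m) =>
            ∑ τ ∈ Finset.Icc t H, (f τ (X τ) + c τ (X τ) (X (τ - 1))))
          {X | X (t - 1) = y} (ψ t y))
    (x : ℕ → EuclideanSpace ℝ (Fin m)) :
    ∑ t ∈ Finset.Icc 1 H, ‖x t - ψ 1 (x 0) t‖ ^ 2 ≤
      (max 1 (2 * ℓT / μ)) ^ 2 / (1 - (1 - 2 / (Real.sqrt (1 + 2 * ℓT / μ) + 1))) ^ 2 *
        ∑ t ∈ Finset.Icc 1 H, ‖x t - ψ t (x (t - 1)) t‖ ^ 2 := by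
  rcases subsingleton_or_nontrivial (EuclideanSpace ℝ (Fin m)) with hm | hm
  · have hzero (t : ℕ) : x t - ψ 1 (x 0) t = 0 := Subsingleton.elim _ _
    rw [sum_eq_zero fun t _ => by rw [hzero, norm_zero, sq, zero_mul]]
    positivity
  have h₁ : 1 ∈ Icc 1 H := mem_Icc.2 ⟨le_rfl, hH⟩
  have hμℓ : μ ≤ ℓT := (hf 1 h₁).1.le_of_isLSmooth (hf 1 h₁).2.1
  have hopt : IsTailMinimizer f c H ψ := hψ
  have hdecay : μ / 4 * ∑ t ∈ Icc 1 H, ‖x t - ψ 1 (x 0) t‖ ^ 2 ≤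
      3 * ℓT / 2 * ∑ t ∈ Icc 1 H, ‖x t - ψ t (x (t - 1)) t‖ ^ 2 :=
    calc _ ≤ costFrom f c H 1 x - costFrom f c H 1 (ψ 1 (x 0)) :=
          sum_sq_norm_sub_le_costFrom_sub (fun τ hτ => (hf τ hτ).1)
            (fun τ hτ => (hc τ hτ).1) (hψ 1 h₁ (x 0)).1 (hψ 1 h₁ (x 0)).2
      _ = _ := costFrom_one_sub_eq_sum ψ x
      _ ≤ _ := by
          rw [mul_sum]
          exact sum_le_sum fun s hs => hopt.stageCost_add_sub_le (by linarith)
            (fun τ hτ => (hf τ hτ).2.1) (fun τ hτ => (hc τ hτ).2.1) hs x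
  calc _ ≤ 3 * (2 * ℓT / μ) * ∑ t ∈ Icc 1 H, ‖x t - ψ t (x (t - 1)) t‖ ^ 2 := by
        rw [show 3 * (2 * ℓT / μ) = 3 * ℓT / 2 / (μ / 4) by field_simp; ring,
          div_mul_eq_mul_div, le_div_iff₀' (by positivity)]
        exact hdecay
    _ ≤ _ := by
        gcongr
        exact three_mul_le_of_two_le (by rw [le_div_iff₀ hμ]; linarith)

/-- **Error-accumulation bound for online trajectories.** For `τ ∈ {1,…,H}` the hitting
cost `f_τ : ℝ^m → ℝ_{≥0}` is `μ`-strongly convex, `ℓ_T`-smooth and `C²`, the switching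
cost `c_τ` is convex, `ℓ_T`-smooth and `C²`; `ψ t y` is the minimizer of
`∑_{τ=t}^H (f_τ(x_τ) + c_τ(x_τ,x_{τ-1}))` subject to `x_{t-1} = y`. With offline optimum
`x*_τ = (ψ 1 x₀)_τ`, an arbitrary trajectory `x` and per-step errors
`e_t = ‖x_t − (ψ t x_{t-1})_t‖`, we have
`∑_{t=1}^H ‖x_t − x_t*‖² ≤ (C₀²/(1−ρ_G)²) ∑_{t=1}^H e_t²` where
`ρ_G = 1 − 2/(√(1+2ℓ_T/μ)+1)` and `C₀ = max{1, 2ℓ_T/μ}`. -/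
theorem stmt4 {m : ℕ} (μ ℓT : ℝ) (hμ : 0 < μ) (hℓT : 0 ≤ ℓT) (H : ℕ) (hH : 1 ≤ H)
    (f : ℕ → EuclideanSpace ℝ (Fin m) → ℝ)
    (c : ℕ → EuclideanSpace ℝ (Fin m) → EuclideanSpace ℝ (Fin m) → ℝ)
    (hf : ∀ τ ∈ Finset.Icc 1 H, IsStronglyConvex μ (f τ) ∧ IsLSmooth ℓT (f τ) ∧
      (∀ x, 0 ≤ f τ x) ∧ ContDiff ℝ 2 (f τ))
    (hc : ∀ τ ∈ Finset.Icc 1 H, ConvexOn ℝ Set.univ (pairFun (c τ)) ∧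
      IsLSmooth ℓT (pairFun (c τ)) ∧ (∀ x x', 0 ≤ c τ x x') ∧ ContDiff ℝ 2 (pairFun (c τ)))
    (ψ : ℕ → EuclideanSpace ℝ (Fin m) → (ℕ → EuclideanSpace ℝ (Fin m)))
    (hψ : ∀ t ∈ Finset.Icc 1 H, ∀ y,
      ψ t y (t - 1) = y ∧
        IsMinOn
          (fun X : ℕ → EuclideanSpace ℝ (Fin m) =>
            ∑ τ ∈ Finset.Icc t H, (f τ (X τ) + c τ (X τ) (X (τ - 1))))
          {X | X (t - 1) = y} (ψ t y))
    (x : ℕ → EuclideanSpace ℝ (Fin m)) :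
    ∑ t ∈ Finset.Icc 1 H, ‖x t - ψ 1 (x 0) t‖ ^ 2 ≤
      (max 1 (2 * ℓT / μ)) ^ 2 / (1 - (1 - 2 / (Real.sqrt (1 + 2 * ℓT / μ) + 1))) ^ 2 *
        ∑ t ∈ Finset.Icc 1 H, ‖x t - ψ t (x (t - 1)) t‖ ^ 2 :=
  stmt4_general μ ℓT hμ H hH f c hf hc ψ hψ x
end
end

section
/- Analytic core of the error-accumulation theorem: let H be a positive integer, 0 ≤ ρ < 1, C₀ > 0, and let a₁,…,a_H and e₁,…,e_H be nonnegative real numbers satisfying a_t ≤ C₀ ∑_{i=1}^{t} ρ^{t−i} e_i for every t ∈ {1,…,H}. Then ∑_{t=1}^{H} a_t² ≤ (C₀²/(1−ρ)²) ∑_{t=1}^{H} e_t². -/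
open Finset

/-- **Analytic core of the error-accumulation theorem.**
If `a_t ≤ C₀ ∑_{i=1}^t ρ^{t-i} e_i` for nonnegative `a`, `e` and `0 ≤ ρ < 1`, then
`∑_{t=1}^H a_t² ≤ (C₀²/(1-ρ)²) ∑_{t=1}^H e_t²`. -/
theorem stmt5 (H : ℕ) (hH : 0 < H) (ρ C₀ : ℝ) (hρ0 : 0 ≤ ρ) (hρ1 : ρ < 1) (hC₀ : 0 < C₀)
    (a e : ℕ → ℝ)
    (ha : ∀ t ∈ Finset.Icc 1 H, 0 ≤ a t)
    (he : ∀ t ∈ Finset.Icc 1 H, 0 ≤ e t)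
    (hbound : ∀ t ∈ Finset.Icc 1 H, a t ≤ C₀ * ∑ i ∈ Finset.Icc 1 t, ρ ^ (t - i) * e i) :
    ∑ t ∈ Finset.Icc 1 H, (a t) ^ 2 ≤ C₀ ^ 2 / (1 - ρ) ^ 2 * ∑ t ∈ Finset.Icc 1 H, (e t) ^ 2 := by
  have h1ρ : 0 < 1 - ρ := by linarith
  -- geometric sum bound, for any Icc of exponents
  have hgeo : ∀ s : Finset ℕ, ∀ t : ℕ, (∀ i ∈ s, i ≤ t) → (s : Finset ℕ).Nonempty →
      True := fun _ _ _ _ => trivial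
  have hgeo1 : ∀ t : ℕ, ∑ i ∈ Finset.Icc 1 t, ρ ^ (t - i) ≤ 1 / (1 - ρ) := by
    intro t
    have hre : ∑ i ∈ Finset.Icc 1 t, ρ ^ (t - i) = ∑ j ∈ Finset.range t, ρ ^ j := by
      apply Finset.sum_nbij' (fun i => t - i) (fun j => t - j)
      · intro i hi; simp only [Finset.mem_Icc] at hi; simp; omega
      · intro j hj; simp only [Finset.mem_range] at hj; simp only [Finset.mem_Icc]; omega
      · intro i hi; simp only [Finset.mem_Icc] at hi; omega
      · intro j hj; simp only [Finset.mem_range] at hj; omega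
      · intro i hi; rfl
    rw [hre, le_div_iff₀ h1ρ]
    have hm := geom_sum_mul ρ t
    nlinarith [pow_nonneg hρ0 t]
  have hgeo2 : ∀ i : ℕ, ∑ t ∈ Finset.Icc i H, ρ ^ (t - i) ≤ 1 / (1 - ρ) := by
    intro i
    have hre : ∑ t ∈ Finset.Icc i H, ρ ^ (t - i) = ∑ j ∈ Finset.range (H + 1 - i), ρ ^ j := by
      apply Finset.sum_nbij' (fun t => t - i) (fun j => j + i)
      · intro t ht; simp only [Finset.mem_Icc] at ht; simp; omega
      · intro j hj; simp only [Finset.mem_range] at hj; simp only [Finset.mem_Icc]; omega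
      · intro t ht; simp only [Finset.mem_Icc] at ht; omega
      · intro j hj; simp
      · intro t ht; rfl
    rw [hre, le_div_iff₀ h1ρ]
    have hm := geom_sum_mul ρ (H + 1 - i)
    nlinarith [pow_nonneg hρ0 (H + 1 - i)]
  -- step 1: pointwise bound on a t ^ 2 via Cauchy–Schwarz
  have key : ∀ t ∈ Finset.Icc 1 H,
      (a t) ^ 2 ≤ C₀ ^ 2 / (1 - ρ) * ∑ i ∈ Finset.Icc 1 t, ρ ^ (t - i) * (e i) ^ 2 := by
    intro t ht
    have hcs := Finset.sum_mul_sq_le_sq_mul_sq (Finset.Icc 1 t)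
      (fun i => Real.sqrt (ρ ^ (t - i))) (fun i => Real.sqrt (ρ ^ (t - i)) * e i)
    have hsq1 : ∀ i, (Real.sqrt (ρ ^ (t - i))) ^ 2 = ρ ^ (t - i) := fun i =>
      Real.sq_sqrt (pow_nonneg hρ0 _)
    have hIcc : Finset.Icc 1 t ⊆ Finset.Icc 1 H := by
      simp only [Finset.mem_Icc] at ht ⊢
      exact Finset.Icc_subset_Icc le_rfl ht.2
    have heq : ∀ i ∈ Finset.Icc 1 t,
        Real.sqrt (ρ ^ (t - i)) * (Real.sqrt (ρ ^ (t - i)) * e i) = ρ ^ (t - i) * e i := by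
      intro i hi
      rw [← mul_assoc, Real.mul_self_sqrt (pow_nonneg hρ0 _)]
    rw [Finset.sum_congr rfl heq] at hcs
    have heq2 : ∀ i ∈ Finset.Icc 1 t,
        (Real.sqrt (ρ ^ (t - i)) * e i) ^ 2 = ρ ^ (t - i) * (e i) ^ 2 := by
      intro i hi; rw [mul_pow, hsq1]
    rw [Finset.sum_congr rfl (fun i _ => hsq1 i), Finset.sum_congr rfl heq2] at hcs
    have hs1 : ∑ i ∈ Finset.Icc 1 t, ρ ^ (t - i) ≤ 1 / (1 - ρ) := hgeo1 t
    have hS2 : 0 ≤ ∑ i ∈ Finset.Icc 1 t, ρ ^ (t - i) * (e i) ^ 2 :=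
      Finset.sum_nonneg fun i hi => mul_nonneg (pow_nonneg hρ0 _) (sq_nonneg _)
    have hat : a t ≤ C₀ * ∑ i ∈ Finset.Icc 1 t, ρ ^ (t - i) * e i := hbound t ht
    have hat0 : 0 ≤ a t := ha t ht
    have hsum0 : 0 ≤ ∑ i ∈ Finset.Icc 1 t, ρ ^ (t - i) * e i :=
      Finset.sum_nonneg fun i hi => mul_nonneg (pow_nonneg hρ0 _) (he i (hIcc hi))
    calc (a t) ^ 2 ≤ (C₀ * ∑ i ∈ Finset.Icc 1 t, ρ ^ (t - i) * e i) ^ 2 := by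
          apply sq_le_sq' <;> nlinarith
      _ = C₀ ^ 2 * (∑ i ∈ Finset.Icc 1 t, ρ ^ (t - i) * e i) ^ 2 := by ring
      _ ≤ C₀ ^ 2 * ((∑ i ∈ Finset.Icc 1 t, ρ ^ (t - i)) * ∑ i ∈ Finset.Icc 1 t, ρ ^ (t - i) * (e i) ^ 2) := by
          nlinarith [sq_nonneg C₀]
      _ ≤ C₀ ^ 2 * (1 / (1 - ρ) * ∑ i ∈ Finset.Icc 1 t, ρ ^ (t - i) * (e i) ^ 2) := by
          apply mul_le_mul_of_nonneg_left _ (sq_nonneg _)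
          exact mul_le_mul_of_nonneg_right hs1 hS2
      _ = C₀ ^ 2 / (1 - ρ) * ∑ i ∈ Finset.Icc 1 t, ρ ^ (t - i) * (e i) ^ 2 := by ring
  -- step 2: sum and swap
  have hswap : ∑ t ∈ Finset.Icc 1 H, ∑ i ∈ Finset.Icc 1 t, ρ ^ (t - i) * (e i) ^ 2
      = ∑ i ∈ Finset.Icc 1 H, ∑ t ∈ Finset.Icc i H, ρ ^ (t - i) * (e i) ^ 2 := by
    rw [Finset.sum_sigma', Finset.sum_sigma']
    apply Finset.sum_nbij' (fun p => ⟨p.2, p.1⟩) (fun p => ⟨p.2, p.1⟩)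
    · rintro ⟨t, i⟩ h
      simp only [Finset.mem_sigma, Finset.mem_Icc] at h ⊢; omega
    · rintro ⟨i, t⟩ h
      simp only [Finset.mem_sigma, Finset.mem_Icc] at h ⊢; omega
    · rintro ⟨t, i⟩ h; rfl
    · rintro ⟨i, t⟩ h; rfl
    · rintro ⟨t, i⟩ h; rfl
  calc ∑ t ∈ Finset.Icc 1 H, (a t) ^ 2
      ≤ ∑ t ∈ Finset.Icc 1 H, C₀ ^ 2 / (1 - ρ) * ∑ i ∈ Finset.Icc 1 t, ρ ^ (t - i) * (e i) ^ 2 :=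
        Finset.sum_le_sum key
    _ = C₀ ^ 2 / (1 - ρ) * ∑ i ∈ Finset.Icc 1 H, ∑ t ∈ Finset.Icc i H, ρ ^ (t - i) * (e i) ^ 2 := by
        rw [← Finset.mul_sum, hswap]
    _ = C₀ ^ 2 / (1 - ρ) * ∑ i ∈ Finset.Icc 1 H, (e i) ^ 2 * ∑ t ∈ Finset.Icc i H, ρ ^ (t - i) := by
        congr 1
        apply Finset.sum_congr rfl
        intro i hi
        rw [Finset.mul_sum]
        apply Finset.sum_congr rfl; intro t ht; ring
    _ ≤ C₀ ^ 2 / (1 - ρ) * ∑ i ∈ Finset.Icc 1 H, (e i) ^ 2 * (1 / (1 - ρ)) := by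
        apply mul_le_mul_of_nonneg_left _ (by positivity)
        apply Finset.sum_le_sum
        intro i hi
        exact mul_le_mul_of_nonneg_left (hgeo2 i) (sq_nonneg _)
    _ = C₀ ^ 2 / (1 - ρ) ^ 2 * ∑ t ∈ Finset.Icc 1 H, (e t) ^ 2 := by
        rw [← Finset.sum_mul,
          show C₀ ^ 2 / (1 - ρ) ^ 2 = C₀ ^ 2 / (1 - ρ) * (1 / (1 - ρ)) from by
            rw [sq (1 - ρ), div_mul_div_comm, mul_one]]
        ring
end

section
/- Structure of powers of a block tridiagonal matrix with zero diagonal blocks (Lemma 'J-properties'). Let J be a block matrix with k × k blocks such that J_{i,i} = 0 for all i and J_{i,j} = 0 whenever |i − j| > 1. Then for every ℓ ≥ 1 and all indices i, j: (i) (J^ℓ)_{i,j} = 0 whenever ℓ < |i − j| or ℓ − |i − j| is odd; (ii) (J^ℓ)_{i,j} is a sum of at most C(ℓ, (ℓ − |i−j|)/2) products of ℓ of the nonzero blocks of J; in particular ‖(J^ℓ)_{i,j}‖ ≤ C(ℓ, (ℓ − |i−j|)/2) · (max_{i',j'} ‖J_{i',j'}‖)^ℓ, with the convention that C(ℓ,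 m/2) = 0 when m is odd. -/
open Matrix

noncomputable section

/-- The operator norm (induced by the Euclidean norms) of a real matrix. -/
def matOpNorm {m n : Type*} [Fintype m] [Fintype n] [DecidableEq n] (M : Matrix m n ℝ) : ℝ :=
  ‖LinearMap.toContinuousLinearMap (Matrix.toEuclideanLin M)‖

/-- The `(i,j)` block of a block matrix `M`. -/
def blockOf {ι κ : Type*} (M : Matrix (ι × κ) (ι × κ) ℝ) (i j : ι) : Matrix κ κ ℝ :=
  Matrix.of fun a b => M (i, a) (j, b)

/-- Half-indexed binomial coefficient: `chalf m k` is `C(m, k/2)` with the convention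
that it equals `0` if `k` is negative or odd. -/
def chalf (m : ℕ) (k : ℤ) : ℕ :=
  if k < 0 ∨ k % 2 = 1 then 0 else m.choose (k.toNat / 2)

open scoped Matrix.Norms.L2Operator

lemma matOpNorm_eq {m n : Type*} [Fintype m] [Fintype n] [DecidableEq n] (M : Matrix m n ℝ) :
    matOpNorm M = ‖M‖ := rfl

lemma matIdNorm_le {d : ℕ} : ‖(1 : Matrix (Fin d) (Fin d) ℝ)‖ ≤ 1 := by
  rw [Matrix.cstar_norm_def, _root_.map_one, ContinuousLinearMap.one_def]
  exact ContinuousLinearMap.norm_id_le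

lemma blockOf_mul {k d : ℕ} (A B : Matrix (Fin k × Fin d) (Fin k × Fin d) ℝ) (i j : Fin k) :
    blockOf (A * B) i j = ∑ m : Fin k, blockOf A i m * blockOf B m j := by
  ext a c
  simp only [blockOf, Matrix.of_apply, Matrix.mul_apply, Matrix.sum_apply,
    Fintype.sum_prod_type]

lemma chalf_eq_zero {m : ℕ} {t : ℤ} (h : t < 0 ∨ Odd t) : chalf m t = 0 := by
  unfold chalf
  rw [if_pos]
  rcases h with h | h
  · exact Or.inl h
  · exact Or.inr (Int.odd_iff.mp h)

lemma chalf_step (ℓ : ℕ) (r : ℤ) : chalf ℓ (r - 2) + chalf ℓ r ≤ chalf (ℓ + 1) r := by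
  by_cases h : r < 0 ∨ r % 2 = 1
  · have e1 : chalf ℓ (r - 2) = 0 := by unfold chalf; rw [if_pos (by omega)]
    have e2 : chalf ℓ r = 0 := by unfold chalf; rw [if_pos h]
    have e3 : chalf (ℓ + 1) r = 0 := by unfold chalf; rw [if_pos h]
    omega
  · have e2 : chalf ℓ r = ℓ.choose (r.toNat / 2) := by unfold chalf; rw [if_neg h]
    have e3 : chalf (ℓ + 1) r = (ℓ + 1).choose (r.toNat / 2) := by unfold chalf; rw [if_neg h]
    push_neg at h
    rcases eq_or_lt_of_le h.1 with h0 | h2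
    · have e1 : chalf ℓ (r - 2) = 0 := by unfold chalf; rw [if_pos (by omega)]
      have e0 : r.toNat / 2 = 0 := by omega
      rw [e1, e2, e3, e0]
      simp
    · have e1 : chalf ℓ (r - 2) = ℓ.choose ((r - 2).toNat / 2) := by
        unfold chalf; rw [if_neg (by omega)]
      have e : r.toNat / 2 = (r - 2).toNat / 2 + 1 := by omega
      rw [e1, e2, e3, e, Nat.choose_succ_succ]

lemma chalf_center (ℓ : ℕ) :
    chalf ℓ ((ℓ : ℤ) - 1) + chalf ℓ ((ℓ : ℤ) - 1) ≤ chalf (ℓ + 1) ((ℓ : ℤ) + 1) := by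
  rcases Nat.even_or_odd ℓ with ⟨m, rfl⟩ | ⟨m, rfl⟩
  · have e1 : chalf (m + m) (((m + m : ℕ) : ℤ) - 1) = 0 := by
      unfold chalf; rw [if_pos (by omega)]
    rw [e1]
    simp
  · have e1 : chalf (2 * m + 1) (((2 * m + 1 : ℕ) : ℤ) - 1) = (2 * m + 1).choose m := by
      unfold chalf; rw [if_neg (by omega)]; congr 1; omega
    have e2 : chalf (2 * m + 1 + 1) (((2 * m + 1 : ℕ) : ℤ) + 1)
        = (2 * m + 1 + 1).choose (m + 1) := by
      unfold chalf; rw [if_neg (by omega)]; congr 1; omega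
    rw [e1, e2, Nat.choose_succ_succ, Nat.choose_symm_half]

lemma chalf_pascal (ℓ : ℕ) (u : ℤ) :
    chalf ℓ ((ℓ : ℤ) - |u + 1|) + chalf ℓ ((ℓ : ℤ) - |u - 1|)
      ≤ chalf (ℓ + 1) ((ℓ : ℤ) + 1 - |u|) := by
  rcases lt_trichotomy u 0 with h | rfl | h
  · have e1 : |u + 1| = -u - 1 := by rw [abs_of_nonpos (by omega)]; ring
    have e2 : |u - 1| = -u + 1 := by rw [abs_of_nonpos (by omega)]; ring
    have e3 : |u| = -u := abs_of_neg h
    rw [e1, e2, e3]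
    have g1 : (ℓ : ℤ) - (-u - 1) = (ℓ : ℤ) + 1 + u := by ring
    have g2 : (ℓ : ℤ) - (-u + 1) = ((ℓ : ℤ) + 1 + u) - 2 := by ring
    have g3 : (ℓ : ℤ) + 1 - -u = (ℓ : ℤ) + 1 + u := by ring
    rw [g1, g2, g3, Nat.add_comm]
    exact chalf_step ℓ ((ℓ : ℤ) + 1 + u)
  · simpa using chalf_center ℓ
  · have e1 : |u + 1| = u + 1 := abs_of_nonneg (by omega)
    have e2 : |u - 1| = u - 1 := abs_of_nonneg (by omega)
    have e3 : |u| = u := abs_of_pos h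
    rw [e1, e2, e3]
    have g1 : (ℓ : ℤ) - (u + 1) = ((ℓ : ℤ) + 1 - u) - 2 := by ring
    have g2 : (ℓ : ℤ) - (u - 1) = (ℓ : ℤ) + 1 - u := by ring
    rw [g1, g2]
    exact chalf_step ℓ ((ℓ : ℤ) + 1 - u)

lemma sum_indicator_le {k : ℕ} (x : ℤ) (v : ℝ) (hv : 0 ≤ v) :
    (∑ m : Fin k, if ((m : ℕ) : ℤ) = x then v else 0) ≤ v := by
  rcases em (∃ m : Fin k, ((m : ℕ) : ℤ) = x) with ⟨m, hm⟩ | h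
  · rw [Finset.sum_eq_single m]
    · rw [if_pos hm]
    · intro n _ hnm
      rw [if_neg]
      intro hn
      exact hnm (Fin.ext (by omega))
    · intro hmem
      exact absurd (Finset.mem_univ m) hmem
  · push_neg at h
    rw [Finset.sum_eq_zero]
    · exact hv
    · intro n _
      exact if_neg (h n)

/-- The key norm bound, proved by induction on `ℓ` (including `ℓ = 0`). -/
lemma key_bound (k d : ℕ) (J : Matrix (Fin k × Fin d) (Fin k × Fin d) ℝ)
    (hdiag : ∀ i : Fin k, blockOf J i i = 0)
    (hband : ∀ i j : Fin k, 1 < |(i : ℤ) - (j : ℤ)| → blockOf J i j = 0)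
    (b : ℝ) (hb : ∀ i j : Fin k, matOpNorm (blockOf J i j) ≤ b) (hb0 : 0 ≤ b) :
    ∀ ℓ : ℕ, ∀ i j : Fin k,
      matOpNorm (blockOf (J ^ ℓ) i j)
        ≤ (chalf ℓ ((ℓ : ℤ) - |(i : ℤ) - (j : ℤ)|) : ℝ) * b ^ ℓ := by
  intro ℓ
  induction ℓ with
  | zero =>
      intro i j
      rw [pow_zero, matOpNorm_eq, pow_zero, mul_one]
      by_cases hij : i = j
      · subst hij
        have h1 : blockOf (1 : Matrix (Fin k × Fin d) (Fin k × Fin d) ℝ) i i = 1 := by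
          ext a c
          simp [blockOf, Matrix.one_apply, Prod.ext_iff]
        rw [h1]
        have e : (((0 : ℕ) : ℤ)) - |((i : ℕ) : ℤ) - ((i : ℕ) : ℤ)| = 0 := by simp
        rw [e]
        have hc : chalf 0 0 = 1 := by norm_num [chalf]
        rw [hc]
        simpa using matIdNorm_le
      · have h0 : blockOf (1 : Matrix (Fin k × Fin d) (Fin k × Fin d) ℝ) i j = 0 := by
          ext a c
          simp only [blockOf, Matrix.of_apply, Matrix.one_apply, Prod.ext_iff, Matrix.zero_apply]
          rw [if_neg]
          rintro ⟨h1, -⟩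
          exact hij h1
        rw [h0, norm_zero]
        positivity
  | succ ℓ ih =>
      intro i j
      rw [pow_succ, blockOf_mul, matOpNorm_eq]
      simp only [matOpNorm_eq] at ih hb
      calc ‖∑ m : Fin k, blockOf (J ^ ℓ) i m * blockOf J m j‖
          ≤ ∑ m : Fin k, ‖blockOf (J ^ ℓ) i m * blockOf J m j‖ :=
            norm_sum_le _ _
        _ ≤ ∑ m : Fin k,
              ((if ((m : ℕ) : ℤ) = (j : ℤ) - 1 then
                  (chalf ℓ ((ℓ : ℤ) - |(i : ℤ) - ((j : ℤ) - 1)|) : ℝ) * b ^ ℓ * b else 0)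
               + (if ((m : ℕ) : ℤ) = (j : ℤ) + 1 then
                  (chalf ℓ ((ℓ : ℤ) - |(i : ℤ) - ((j : ℤ) + 1)|) : ℝ) * b ^ ℓ * b else 0)) := by
            apply Finset.sum_le_sum
            intro m _
            by_cases h1 : ((m : ℕ) : ℤ) = (j : ℤ) - 1
            · rw [if_pos h1, if_neg (by omega), add_zero]
              have := mul_le_mul (ih i m) (hb m j) (norm_nonneg _) (by positivity)
              refine le_trans (norm_mul_le _ _) (le_trans this ?_)
              rw [h1]
            · rw [if_neg h1]
              by_cases h2 : ((m : ℕ) : ℤ) = (j : ℤ) + 1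
              · rw [if_pos h2, zero_add]
                have := mul_le_mul (ih i m) (hb m j) (norm_nonneg _) (by positivity)
                refine le_trans (norm_mul_le _ _) (le_trans this ?_)
                rw [h2]
              · -- blockOf J m j = 0
                have hz : blockOf J m j = 0 := by
                  by_cases hmj : m = j
                  · subst hmj; exact hdiag m
                  · apply hband
                    have : ((m : ℕ) : ℤ) ≠ ((j : ℕ) : ℤ) := by
                      intro hc
                      exact hmj (Fin.ext (by omega))
                    rcases abs_cases ((m : ℤ) - (j : ℤ)) with ⟨he, _⟩ | ⟨he, _⟩ <;> omega
                rw [hz, mul_zero, norm_zero, if_neg h2, add_zero]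
        _ ≤ (chalf ℓ ((ℓ : ℤ) - |(i : ℤ) - ((j : ℤ) - 1)|) : ℝ) * b ^ ℓ * b
            + (chalf ℓ ((ℓ : ℤ) - |(i : ℤ) - ((j : ℤ) + 1)|) : ℝ) * b ^ ℓ * b := by
            rw [Finset.sum_add_distrib]
            have A := sum_indicator_le (k := k) ((j : ℤ) - 1)
              ((chalf ℓ ((ℓ : ℤ) - |(i : ℤ) - ((j : ℤ) - 1)|) : ℝ) * b ^ ℓ * b) (by positivity)
            have B := sum_indicator_le (k := k) ((j : ℤ) + 1)
              ((chalf ℓ ((ℓ : ℤ) - |(i : ℤ) - ((j : ℤ) + 1)|) : ℝ) * b ^ ℓ * b) (by positivity)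
            exact add_le_add A B
        _ ≤ (chalf (ℓ + 1) (((ℓ : ℕ) + 1 : ℤ) - |(i : ℤ) - (j : ℤ)|) : ℝ) * b ^ (ℓ + 1) := by
            have hp := chalf_pascal ℓ ((i : ℤ) - (j : ℤ))
            have e1 : (i : ℤ) - ((j : ℤ) - 1) = ((i : ℤ) - (j : ℤ)) + 1 := by ring
            have e2 : (i : ℤ) - ((j : ℤ) + 1) = ((i : ℤ) - (j : ℤ)) - 1 := by ring
            rw [e1, e2]
            have hcast : ((chalf ℓ ((ℓ : ℤ) - |((i : ℤ) - (j : ℤ)) + 1|) : ℝ)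
                + (chalf ℓ ((ℓ : ℤ) - |((i : ℤ) - (j : ℤ)) - 1|) : ℝ))
                ≤ (chalf (ℓ + 1) ((ℓ : ℤ) + 1 - |(i : ℤ) - (j : ℤ)|) : ℝ) := by
              exact_mod_cast hp
            calc (chalf ℓ ((ℓ : ℤ) - |((i : ℤ) - (j : ℤ)) + 1|) : ℝ) * b ^ ℓ * b
                  + (chalf ℓ ((ℓ : ℤ) - |((i : ℤ) - (j : ℤ)) - 1|) : ℝ) * b ^ ℓ * b
                = ((chalf ℓ ((ℓ : ℤ) - |((i : ℤ) - (j : ℤ)) + 1|) : ℝ)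
                  + (chalf ℓ ((ℓ : ℤ) - |((i : ℤ) - (j : ℤ)) - 1|) : ℝ)) * b ^ (ℓ + 1) := by
                  ring
              _ ≤ (chalf (ℓ + 1) ((ℓ : ℤ) + 1 - |(i : ℤ) - (j : ℤ)|) : ℝ) * b ^ (ℓ + 1) := by
                  apply mul_le_mul_of_nonneg_right hcast (by positivity)
              _ = (chalf (ℓ + 1) (((ℓ : ℕ) + 1 : ℤ) - |(i : ℤ) - (j : ℤ)|) : ℝ) * b ^ (ℓ + 1) := by
                  norm_num

/-- **Structure of powers of a block tridiagonal matrix with zero diagonal blocks**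
(Lemma `J-properties`). If `J` has `k × k` blocks with `J_{i,i} = 0` and `J_{i,j} = 0`
for `|i−j| > 1`, then for every `ℓ ≥ 1` and all `i, j`:
(i) `(J^ℓ)_{i,j} = 0` whenever `ℓ < |i−j|` or `ℓ − |i−j|` is odd; and
(ii) `‖(J^ℓ)_{i,j}‖ ≤ C(ℓ, (ℓ−|i−j|)/2) b^ℓ` for any uniform bound `b` on the block norms,
with the convention `C(ℓ, m/2) = 0` for `m` odd or negative. -/
theorem stmt9 (k d : ℕ) (J : Matrix (Fin k × Fin d) (Fin k × Fin d) ℝ)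
    (hdiag : ∀ i : Fin k, blockOf J i i = 0)
    (hband : ∀ i j : Fin k, 1 < |(i : ℤ) - (j : ℤ)| → blockOf J i j = 0)
    (b : ℝ) (hb : ∀ i j : Fin k, matOpNorm (blockOf J i j) ≤ b) :
    ∀ ℓ : ℕ, 1 ≤ ℓ → ∀ i j : Fin k,
      (((ℓ : ℤ) < |(i : ℤ) - (j : ℤ)| ∨ Odd ((ℓ : ℤ) - |(i : ℤ) - (j : ℤ)|)) →
        blockOf (J ^ ℓ) i j = 0) ∧
      matOpNorm (blockOf (J ^ ℓ) i j)
        ≤ (chalf ℓ ((ℓ : ℤ) - |(i : ℤ) - (j : ℤ)|) : ℝ) * b ^ ℓ := by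
  intro ℓ hℓ i j
  have hb0 : 0 ≤ b := by
    refine le_trans ?_ (hb i i)
    rw [matOpNorm_eq]
    exact norm_nonneg _
  have hkey := key_bound k d J hdiag hband b hb hb0 ℓ i j
  refine ⟨?_, hkey⟩
  intro h
  have hz : chalf ℓ ((ℓ : ℤ) - |(i : ℤ) - (j : ℤ)|) = 0 := by
    apply chalf_eq_zero
    rcases h with h | h
    · exact Or.inl (by omega)
    · exact Or.inr h
  rw [hz] at hkey
  simp only [Nat.cast_zero, zero_mul] at hkey
  rw [matOpNorm_eq] at hkey
  exact norm_le_zero_iff.mp hkey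
end
end

section
/- Elementary inequality (Lemma 'numerical-lower-bound'). For every real ε with 0 ≤ ε < √2, (2 + ε) / (2 · (1 + ε)^{(1+ε)/(2+ε)}) ≥ 1 − ε²/2. -/
/-! Bernoulli's inequality `(1 + ε) ^ p ≤ 1 + p ε` for the exponent `p = (1 + ε) / (2 + ε) ∈ [0, 1]`
reduces the claim to a rational inequality: with this bound the right-hand side becomes
`(2 + ε)² / (2 (2 + 2ε + ε²))`, and clearing denominators leaves `0 ≤ ε² + 2ε³ + ε⁴`. -/

lemma one_sub_sq_div_two_le_div_one_add_mul {ε : ℝ} (hε : 0 ≤ ε) :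
    1 - ε ^ 2 / 2 ≤ (2 + ε) / (2 * (1 + (1 + ε) / (2 + ε) * ε)) := by
  have h2ε : 0 < 2 + ε := by linarith
  have hden : 2 * (1 + (1 + ε) / (2 + ε) * ε) = 2 * (2 + 2 * ε + ε ^ 2) / (2 + ε) := by
    field_simp
    ring
  rw [hden, div_div_eq_mul_div, le_div_iff₀ (by positivity)]
  nlinarith [pow_nonneg hε 3, pow_nonneg hε 4]

theorem stmt12_general (ε : ℝ) (hε0 : 0 ≤ ε) :
    1 - ε ^ 2 / 2 ≤ (2 + ε) / (2 * (1 + ε) ^ ((1 + ε) / (2 + ε))) := by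
  have h2ε : 0 < 2 + ε := by linarith
  have hp1 : (1 + ε) / (2 + ε) ≤ 1 := (div_le_one h2ε).2 (by linarith)
  calc 1 - ε ^ 2 / 2 ≤ (2 + ε) / (2 * (1 + (1 + ε) / (2 + ε) * ε)) :=
        one_sub_sq_div_two_le_div_one_add_mul hε0
    _ ≤ (2 + ε) / (2 * (1 + ε) ^ ((1 + ε) / (2 + ε))) := by
        gcongr
        exact rpow_one_add_le_one_add_mul_self (by linarith) (by positivity) hp1

/-- **Elementary inequality (Lemma `numerical-lower-bound`).**
For every real `0 ≤ ε < √2`, `(2 + ε) / (2 (1 + ε)^{(1+ε)/(2+ε)}) ≥ 1 − ε²/2`.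
The power is the real power function. -/
theorem stmt12 (ε : ℝ) (hε0 : 0 ≤ ε) (hε1 : ε < Real.sqrt 2) :
    1 - ε ^ 2 / 2 ≤ (2 + ε) / (2 * (1 + ε) ^ ((1 + ε) / (2 + ε))) :=
  stmt12_general ε hε0
end

section
/- Approximate-triangle inequality for smooth convex functions (Lemma 'smooth-difference'). Let m be a positive integer and h : ℝ^m → ℝ_{≥0} be convex, ℓ-smooth, and continuously differentiable. Then for all x, y ∈ ℝ^m and every η > 0: h(x) ≤ (1 + η) h(y) + (ℓ/2)(1 + 1/η) ‖x − y‖². -/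
/-- **Approximate-triangle inequality for smooth convex functions (Lemma `smooth-difference`).**
If `h : ℝ^m → ℝ_{≥0}` is convex, `ℓ`-smooth and continuously differentiable, then for all
`x, y` and every `η > 0`: `h(x) ≤ (1+η) h(y) + (ℓ/2)(1 + 1/η)‖x − y‖²`. -/
theorem stmt14 (m : ℕ) (hm : 0 < m) (ℓ : ℝ)
    (h : EuclideanSpace ℝ (Fin m) → ℝ)
    (hconv : ConvexOn ℝ Set.univ h)
    (hsmooth : IsLSmooth ℓ h)
    (hC1 : ContDiff ℝ 1 h)
    (hnonneg : ∀ x, 0 ≤ h x) :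
    ∀ x y : EuclideanSpace ℝ (Fin m), ∀ η : ℝ, 0 < η →
      h x ≤ (1 + η) * h y + ℓ / 2 * (1 + 1 / η) * ‖x - y‖ ^ 2 := by
  rintro x y η hη
  obtain ⟨hdiff, hsm⟩ := hsmooth
  set g : ℝ := fderiv ℝ h y (x - y) with hg
  have h1 : h x ≤ h y + g + ℓ / 2 * ‖x - y‖ ^ 2 := hsm y x
  set z : EuclideanSpace ℝ (Fin m) := y - (1/η) • (x - y) with hzdef
  have hz : z - y = (-(1/η)) • (x - y) := by
    rw [hzdef]; module
  have hη' : 0 < (1:ℝ)/η := by positivity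
  have hn : ‖(-(1/η)) • (x - y)‖ = (1/η) * ‖x - y‖ := by
    rw [norm_smul, Real.norm_eq_abs, abs_neg, abs_of_pos hη']
  have h2 : h z ≤ h y + (-(1/η)) * g + ℓ / 2 * ((1/η) * ‖x - y‖) ^ 2 := by
    have := hsm y z
    rw [hz, map_smul, smul_eq_mul, ← hg, hn] at this
    exact this
  have h3 : 0 ≤ h z := hnonneg z
  have hkey : g ≤ η * h y + ℓ / 2 * (1/η) * ‖x - y‖ ^ 2 := by
    have hmul : 0 ≤ η * (h y + (-(1/η)) * g + ℓ / 2 * ((1/η) * ‖x - y‖) ^ 2) :=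
      mul_nonneg hη.le (h3.trans h2)
    have hexp : η * (h y + (-(1/η)) * g + ℓ / 2 * ((1/η) * ‖x - y‖) ^ 2)
        = η * h y - g + ℓ / 2 * (1/η) * ‖x - y‖ ^ 2 := by
      field_simp
      ring
    rw [hexp] at hmul
    linarith
  nlinarith [sq_nonneg ‖x - y‖]
end

section
/- Comparison of temporal decay factors (Lemma 'temporal-upper-and-lower'). Let a_T > 0 and set ρ_T = √(1 − 2/(√(1 + 2a_T) + 1)) and λ_T = (1 − 2/(√(1 + 4a_T) + 1))². Then ρ_T⁴ ≤ λ_T ≤ ρ_T². -/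
/-- **Comparison of temporal decay factors (Lemma `temporal-upper-and-lower`).**
For `a_T > 0`, with `ρ_T = √(1 − 2/(√(1+2a_T)+1))` and `λ_T = (1 − 2/(√(1+4a_T)+1))²`,
we have `ρ_T⁴ ≤ λ_T ≤ ρ_T²`. -/
theorem stmt15 (aT : ℝ) (haT : 0 < aT) :
    (Real.sqrt (1 - 2 / (Real.sqrt (1 + 2 * aT) + 1))) ^ 4
        ≤ (1 - 2 / (Real.sqrt (1 + 4 * aT) + 1)) ^ 2 ∧
      (1 - 2 / (Real.sqrt (1 + 4 * aT) + 1)) ^ 2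
        ≤ (Real.sqrt (1 - 2 / (Real.sqrt (1 + 2 * aT) + 1))) ^ 2 := by
  set s := Real.sqrt (1 + 2 * aT) with hs
  set t := Real.sqrt (1 + 4 * aT) with ht
  have h1 : (1:ℝ) ≤ s := by
    have := Real.sqrt_le_sqrt (show (1:ℝ) ≤ 1 + 2 * aT by linarith)
    simpa only [Real.sqrt_one] using this
  have h2 : (1:ℝ) ≤ t := by
    have := Real.sqrt_le_sqrt (show (1:ℝ) ≤ 1 + 4 * aT by linarith)
    simpa only [Real.sqrt_one] using this
  have hst : s ≤ t := Real.sqrt_le_sqrt (by linarith)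
  have hs2 : s ^ 2 = 1 + 2 * aT := Real.sq_sqrt (by linarith)
  have ht2 : t ^ 2 = 1 + 4 * aT := Real.sq_sqrt (by linarith)
  have hsp : (0:ℝ) < s + 1 := by linarith
  have htp : (0:ℝ) < t + 1 := by linarith
  have hx : 1 - 2 / (s + 1) = (s - 1) / (s + 1) := by field_simp; ring
  have hy : 1 - 2 / (t + 1) = (t - 1) / (t + 1) := by field_simp; ring
  have hx0 : 0 ≤ (s - 1) / (s + 1) := div_nonneg (by linarith) hsp.le
  have hy0 : 0 ≤ (t - 1) / (t + 1) := div_nonneg (by linarith) htp.le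
  have hxy : (s - 1) / (s + 1) ≤ (t - 1) / (t + 1) := by
    rw [div_le_div_iff₀ hsp htp]
    nlinarith
  have hsq : Real.sqrt (1 - 2 / (s + 1)) ^ 2 = (s - 1) / (s + 1) := by
    rw [hx]; exact Real.sq_sqrt hx0
  have hsq4 : Real.sqrt (1 - 2 / (s + 1)) ^ 4 = ((s - 1) / (s + 1)) ^ 2 := by
    have : Real.sqrt (1 - 2 / (s + 1)) ^ 4 = (Real.sqrt (1 - 2 / (s + 1)) ^ 2) ^ 2 := by ring
    rw [this, hsq]
  constructor
  · rw [hsq4, hy]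
    exact pow_le_pow_left₀ hx0 hxy 2
  · rw [hsq, hy]
    rw [div_pow, div_le_div_iff₀ (by positivity) hsp]
    nlinarith [mul_nonneg (by linarith : (0:ℝ) ≤ s) (sub_nonneg.2 hst),
      mul_nonneg (mul_nonneg (by linarith : (0:ℝ) ≤ s) (sub_nonneg.2 hst)) hsp.le]
end

section
/- Comparison of spatial decay factors (Lemma 'spatial-upper-and-lower'). Let s > 0 and set ρ_S = √(1 − 2/(√(1 + s) + 1)) and λ_S = s/(3 + 3s) if s < 48, and λ_S = max( s/(3 + 3s), (1 − 4√3 · s^{-1/2})² ) if s ≥ 48. Then ρ_S^{32} ≤ λ_S. -/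
/-!
Write `t = √(1+s) - 1 > 0`, so that `s = t (t+2)` and `ρ_S² = t/(t+2)`. Bernoulli's inequality
applied to `(t+2)/t = 1 + 2/t` gives `(t/(t+2))ⁿ ≤ t/(t+2n)`. For `s ≤ 200` the case `n = 15`
yields `ρ_S^32 ≤ ρ_S²/3 ≤ s/(3+3s)`; for `s > 200` the case `n = 8` yields
`ρ_S^16 ≤ √s/(√s+16) ≤ 1 - 4√3/√s`, using `√3 ≤ 7/4`.
-/

open Real

lemma div_add_two_pow_le {t : ℝ} (ht : 0 < t) (n : ℕ) :
    (t / (t + 2)) ^ n ≤ t / (t + 2 * n) := by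
  have hbernoulli : 1 + n * (2 / t) ≤ (1 + 2 / t) ^ n :=
    one_add_mul_le_pow (by linarith [div_pos two_pos ht]) n
  have hq : t / (t + 2) = (1 + 2 / t)⁻¹ := by field_simp
  have hr : t / (t + 2 * n) = (1 + n * (2 / t))⁻¹ := by field_simp
  rw [hq, hr, inv_pow]
  exact inv_anti₀ (by positivity) hbernoulli

lemma div_add_two_pow_sixteen_le_div_three {t : ℝ} (ht : 0 < t) (ht15 : t ≤ 15) :
    (t / (t + 2)) ^ 16 ≤ t * (t + 2) / (3 + 3 * (t * (t + 2))) := by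
  have hq : 0 ≤ t / (t + 2) := by positivity
  have h15 : (t / (t + 2)) ^ 15 ≤ 1 / 3 :=
    (div_add_two_pow_le ht 15).trans <| by
      rw [div_le_div_iff₀ (by positivity) three_pos]; push_cast; linarith
  calc (t / (t + 2)) ^ 16 = t / (t + 2) * (t / (t + 2)) ^ 15 := by ring
    _ ≤ t / (t + 2) * (1 / 3) := mul_le_mul_of_nonneg_left h15 hq
    _ ≤ t * (t + 2) / (3 + 3 * (t * (t + 2))) := by
      rw [div_mul_div_comm, div_le_div_iff₀ (by positivity) (by positivity)]
      nlinarith [mul_pos ht ht, mul_pos (mul_pos ht ht) ht]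

lemma div_add_sixteen_le_one_sub {t w : ℝ} (ht : 0 ≤ t) (htw : t ≤ w) (hw : 14 ≤ w) :
    t / (t + 16) ≤ 1 - 4 * √3 / w := by
  have hsqrt3 : √3 ≤ 7 / 4 := (sqrt_le_left (by norm_num)).mpr (by norm_num)
  calc t / (t + 16) ≤ w / (w + 16) := by
        rw [div_le_div_iff₀ (by linarith) (by linarith)]; nlinarith
    _ ≤ 1 - 4 * √3 / w := by
      rw [one_sub_div (by positivity), div_le_div_iff₀ (by linarith) (by linarith)]
      nlinarith [sqrt_nonneg 3]

lemma div_add_two_pow_sixteen_le_sq {t s : ℝ} (ht : 0 < t) (hts : s = t * (t + 2))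
    (hs : 196 ≤ s) :
    (t / (t + 2)) ^ 16 ≤ (1 - 4 * √3 * s ^ (-(1 : ℝ) / 2)) ^ 2 := by
  have hrpow : s ^ (-(1 : ℝ) / 2) = 1 / √s := by
    rw [neg_div, rpow_neg (by linarith), ← sqrt_eq_rpow, one_div]
  have htw : t ≤ √s := (le_sqrt ht.le (by linarith)).mpr (by nlinarith)
  have hw : 14 ≤ √s := (le_sqrt (by norm_num) (by linarith)).mpr (by linarith)
  have h8 : (t / (t + 2)) ^ 8 ≤ 1 - 4 * √3 / √s :=
    (div_add_two_pow_le ht 8).trans (by exact_mod_cast div_add_sixteen_le_one_sub ht.le htw hw)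
  rw [hrpow, mul_one_div, show (16 : ℕ) = 8 * 2 from rfl, pow_mul]
  exact pow_le_pow_left₀ (by positivity) h8 2

/-- **Comparison of spatial decay factors (Lemma `spatial-upper-and-lower`).**
For `s > 0`, with `ρ_S = √(1 − 2/(√(1+s)+1))` and
`λ_S = s/(3+3s)` if `s < 48`, `λ_S = max(s/(3+3s), (1 − 4√3·s^{-1/2})²)` otherwise,
we have `ρ_S^32 ≤ λ_S`. -/
theorem stmt16 (s : ℝ) (hs : 0 < s) :
    (Real.sqrt (1 - 2 / (Real.sqrt (1 + s) + 1))) ^ 32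
      ≤ if s < 48 then s / (3 + 3 * s)
        else max (s / (3 + 3 * s)) ((1 - 4 * Real.sqrt 3 * s ^ (-(1 : ℝ) / 2)) ^ 2) := by
  set t := √(1 + s) - 1 with ht_def
  have hsq : (t + 1) ^ 2 = 1 + s := by rw [ht_def, sub_add_cancel, sq_sqrt (by linarith)]
  have ht : 0 < t := by nlinarith [sqrt_nonneg (1 + s)]
  have hts : s = t * (t + 2) := by linear_combination -hsq
  have hρ : √(1 - 2 / (√(1 + s) + 1)) ^ 32 = (t / (t + 2)) ^ 16 := by
    have hq : 1 - 2 / (√(1 + s) + 1) = t / (t + 2) := by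
      rw [show √(1 + s) + 1 = t + 2 by ring]; field_simp; ring
    rw [hq, show (32 : ℕ) = 2 * 16 from rfl, pow_mul, sq_sqrt (by positivity)]
  have hsmall : s ≤ 200 → (t / (t + 2)) ^ 16 ≤ s / (3 + 3 * s) := fun h200 => by
    rw [hts]; exact div_add_two_pow_sixteen_le_div_three ht (by nlinarith)
  rw [hρ]
  split_ifs with h48
  · exact hsmall (by linarith)
  · rcases le_or_gt s 200 with h200 | h200
    · exact (hsmall h200).trans (le_max_left _ _)
    · exact (div_add_two_pow_sixteen_le_sq ht hts (by linarith)).trans (le_max_right _ _)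
end
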